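/- (Decomposition Lemma) For reduced words u and v over interval letters there are decompositions u = u₁·u′ and v = v′·v₁, unique up to commutation, such that: u′ is left-absorbed by v₁; v′ is properly right-absorbed by u₁; every letter of u′ commutes with every letter of v′; and u₁·v₁ is reduced. Consequently u·v reduces to u₁·v₁. -/

import Mathlib

/-!
A word is reduced exactly when none of its letters is absorbed by the part of the word on either
side of it, and this property is invariant under commutation.

Existence: start from `u₁ = u`, `v₁ = v`, `u' = v' = []`. While `u₁ ++ v₁` is not reduced, some
letter `c` of `u₁` is absorbed across the junction into a letter `f` of `v₁` (then `c` moves to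
`u'`), or some `f` is properly absorbed into some `c` (then `f` moves to `v'`). Reducedness of
`u` and `v` forces the letters moved earlier to commute with the moved one, so the invariants
survive, and `u₁ ++ v₁` gets shorter. Cancelling `u'` into `v₁` and `v'` into `u₁` then gives the
reduction `u ++ v → u₁ ++ v₁`.

Uniqueness: Levi's lemma factors two decompositions of `u` as `u₁ ≈ P Q`, `u' ≈ R S`,
`w₁ ≈ P R`, `w' ≈ Q S`. A last letter of `R` would end `w₁` and be absorbed into `x₁`,
contradicting reducedness of `w₁ ++ x₁`; so `R = []`, symmetrically `Q = []`, and the same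
argument at the heads of `v₁` and `x₁` settles the right-hand factors.
-/

structure Letter (N : ℕ) where
  lo : ℕ
  hi : ℕ
  lo_le_hi : lo ≤ hi
  hi_le : hi ≤ N

namespace PS

/-- `t` is a (non-strict) subletter of `s`. -/
def Sub {N : ℕ} (t s : Letter N) : Prop := s.lo ≤ t.lo ∧ t.hi ≤ s.hi

/-- `t` is a proper subletter of `s`. -/
def PSub {N : ℕ} (t s : Letter N) : Prop := Sub t s ∧ t ≠ s

/-- Two letters commute iff they have distance at least 2. -/
def Comm {N : ℕ} (s t : Letter N) : Prop := s.hi + 2 ≤ t.lo ∨ t.hi + 2 ≤ s.lo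

abbrev Word (N : ℕ) := List (Letter N)

/-- Commutation step: swap two adjacent commuting letters. -/
def SwapStep {N : ℕ} (u v : Word N) : Prop :=
  ∃ (x y : Word N) (s t : Letter N),
    Comm s t ∧ u = x ++ s :: t :: y ∧ v = x ++ t :: s :: y

/-- Cancellation step: replace an occurrence `s·t` or `t·s` by `s`, when `t ⊆ s`. -/
def CancelStep {N : ℕ} (u v : Word N) : Prop :=
  ∃ (x y : Word N) (s t : Letter N),
    Sub t s ∧ (u = x ++ s :: t :: y ∨ u = x ++ t :: s :: y) ∧ v = x ++ s :: y

/-- Splitting step: replace an occurrence `s·s` by a (possibly empty) product of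
proper subletters of `s`. -/
def SplitStep {N : ℕ} (u v : Word N) : Prop :=
  ∃ (x y : Word N) (s : Letter N) (l : Word N),
    (∀ t ∈ l, PSub t s) ∧ u = x ++ s :: s :: y ∧ v = x ++ l ++ y

/-- Commutation-equivalence of words. -/
def WEquiv {N : ℕ} : Word N → Word N → Prop := Relation.ReflTransGen SwapStep

/-- Reduction: finitely many commutation and cancellation steps. -/
def Red {N : ℕ} : Word N → Word N → Prop :=
  Relation.ReflTransGen (fun u v => SwapStep u v ∨ CancelStep u v)

/-- Strong reduction: also allowing splitting steps. -/
def SRed {N : ℕ} : Word N → Word N → Prop :=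
  Relation.ReflTransGen (fun u v => SwapStep u v ∨ CancelStep u v ∨ SplitStep u v)

/-- The congruence defining the monoid Γ. -/
def GammaRel {N : ℕ} : Word N → Word N → Prop :=
  Relation.EqvGen (fun u v => SwapStep u v ∨ CancelStep u v)

/-- A word is reduced if there is no pair of occurrences `i ≠ j` with `sᵢ ⊆ sⱼ`
such that `sᵢ` commutes with every letter strictly between them. -/
def Reduced {N : ℕ} (w : Word N) : Prop :=
  ¬ ∃ (x y z : Word N) (a b : Letter N),
      w = x ++ a :: (y ++ b :: z) ∧
      ((Sub a b ∧ ∀ r ∈ y, Comm a r) ∨ (Sub b a ∧ ∀ r ∈ y, Comm b r))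

/-- The letter `s` is left-absorbed by the word `v`. -/
def LAbsLetter {N : ℕ} (s : Letter N) (v : Word N) : Prop :=
  ∃ (x : Word N) (t : Letter N) (y : Word N),
    v = x ++ t :: y ∧ Sub s t ∧ ∀ r ∈ x, Comm s r

/-- The letter `s` is properly left-absorbed by the word `v`. -/
def PLAbsLetter {N : ℕ} (s : Letter N) (v : Word N) : Prop :=
  ∃ (x : Word N) (t : Letter N) (y : Word N),
    v = x ++ t :: y ∧ PSub s t ∧ ∀ r ∈ x, Comm s r

/-- The letter `s` is right-absorbed by the word `w`. -/
def RAbsLetter {N : ℕ} (s : Letter N) (w : Word N) : Prop :=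
  ∃ (x : Word N) (t : Letter N) (y : Word N),
    w = x ++ t :: y ∧ Sub s t ∧ ∀ r ∈ y, Comm s r

/-- The letter `s` is properly right-absorbed by the word `w`. -/
def PRAbsLetter {N : ℕ} (s : Letter N) (w : Word N) : Prop :=
  ∃ (x : Word N) (t : Letter N) (y : Word N),
    w = x ++ t :: y ∧ PSub s t ∧ ∀ r ∈ y, Comm s r

/-- The word `u` is left-absorbed by `v`. -/
def LAbsWord {N : ℕ} (u v : Word N) : Prop := ∀ s ∈ u, LAbsLetter s v

/-- `v` bites `u` from the right: `v` left-absorbs some letter of the final segment of `u`. -/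
def BitesRight {N : ℕ} (v u : Word N) : Prop :=
  ∃ (x : Word N) (s : Letter N) (y : Word N),
    u = x ++ s :: y ∧ (∀ r ∈ y, Comm s r) ∧ LAbsLetter s v

end PS

namespace PS

variable {N : ℕ}

section Letters

theorem Comm.symm {s t : Letter N} (h : Comm s t) : Comm t s := Or.symm h

theorem Sub.refl (s : Letter N) : Sub s s := ⟨le_rfl, le_rfl⟩

theorem Sub.trans {a b c : Letter N} (hab : Sub a b) (hbc : Sub b c) : Sub a c :=
  ⟨hbc.1.trans hab.1, hab.2.trans hbc.2⟩

theorem Sub.antisymm {a b : Letter N} (hab : Sub a b) (hba : Sub b a) : a = b := by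
  obtain ⟨alo, ahi, _, _⟩ := a
  obtain ⟨blo, bhi, _, _⟩ := b
  obtain ⟨h₁, h₂⟩ := hab
  obtain ⟨h₃, h₄⟩ := hba
  simp only at h₁ h₂ h₃ h₄
  congr <;> omega

theorem psub_le_sub : (PSub : Letter N → Letter N → Prop) ≤ Sub := fun _ _ => And.left

theorem Sub.not_comm {s t : Letter N} (h : Sub t s) : ¬ Comm t s := by
  have := t.lo_le_hi
  have := s.lo_le_hi
  obtain ⟨h₁, h₂⟩ := h
  rintro (h | h) <;> omega

theorem Comm.of_sub_left {r s t : Letter N} (h : Comm s r) (hts : Sub t s) : Comm t r := by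
  have := t.lo_le_hi
  have := s.lo_le_hi
  obtain ⟨h₁, h₂⟩ := hts
  rcases h with h | h
  · exact Or.inl (by omega)
  · exact Or.inr (by omega)

end Letters

theorem _root_.List.append_eq_append_cons {α : Type*} {p q x y : List α} {a : α}
    (h : p ++ q = x ++ a :: y) :
    (∃ m, p = x ++ a :: m ∧ y = m ++ q) ∨ ∃ m, q = m ++ a :: y ∧ x = p ++ m := by
  rcases List.append_eq_append_iff.1 h with ⟨m, hx, hq⟩ | ⟨m, hp, hm⟩
  · exact Or.inr ⟨m, hq, hx⟩
  · rcases List.cons_eq_append_iff.1 hm with ⟨rfl, rfl⟩ | ⟨m, rfl, rfl⟩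
    · exact Or.inr ⟨[], rfl, by simpa using hp.symm⟩
    · exact Or.inl ⟨m, hp, rfl⟩

section Commutation

theorem SwapStep.symm {u v : Word N} (h : SwapStep u v) : SwapStep v u :=
  let ⟨x, y, s, t, hst, hu, hv⟩ := h
  ⟨x, y, t, s, hst.symm, hv, hu⟩

theorem SwapStep.perm {u v : Word N} (h : SwapStep u v) : u.Perm v := by
  obtain ⟨x, y, s, t, -, rfl, rfl⟩ := h
  exact .append_left x (.swap t s y)

theorem SwapStep.append_left {u v : Word N} (p : Word N) (h : SwapStep u v) :
    SwapStep (p ++ u) (p ++ v) := by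
  obtain ⟨x, y, s, t, hst, rfl, rfl⟩ := h
  exact ⟨p ++ x, y, s, t, hst, by simp, by simp⟩

theorem SwapStep.append_right {u v : Word N} (q : Word N) (h : SwapStep u v) :
    SwapStep (u ++ q) (v ++ q) := by
  obtain ⟨x, y, s, t, hst, rfl, rfl⟩ := h
  exact ⟨x, y ++ q, s, t, hst, by simp, by simp⟩

theorem SwapStep.locate {x y w : Word N} {a : Letter N} (h : SwapStep (x ++ a :: y) w) :
    (∃ x', SwapStep x x' ∧ w = x' ++ a :: y) ∨ (∃ y', SwapStep y y' ∧ w = x ++ a :: y') ∨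
      (∃ x₀ c, x = x₀ ++ [c] ∧ Comm c a ∧ w = x₀ ++ a :: c :: y) ∨
      ∃ c y₀, y = c :: y₀ ∧ Comm a c ∧ w = x ++ c :: a :: y₀ := by
  obtain ⟨X, Y, s, t, hst, he, rfl⟩ := h
  rcases List.append_eq_append_cons he.symm with ⟨m, rfl, rfl⟩ | ⟨m, hm, rfl⟩
  · exact Or.inr (Or.inl ⟨_, ⟨m, Y, s, t, hst, rfl, rfl⟩, by simp⟩)
  · rcases m with _ | ⟨g, _ | ⟨g', m⟩⟩ <;> simp only [List.nil_append, List.cons_append,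
      List.cons.injEq] at hm
    · obtain ⟨rfl, rfl⟩ := hm
      exact Or.inr (Or.inr (Or.inr ⟨t, Y, rfl, hst, by simp⟩))
    · obtain ⟨rfl, rfl, rfl⟩ := hm
      exact Or.inr (Or.inr (Or.inl ⟨X, s, rfl, hst, by simp⟩))
    · obtain ⟨rfl, rfl, rfl⟩ := hm
      exact Or.inl ⟨_, ⟨X, m, s, t, hst, rfl, rfl⟩, by simp⟩

theorem WEquiv.refl (u : Word N) : WEquiv u u := Relation.ReflTransGen.refl

theorem WEquiv.single {u v : Word N} (h : SwapStep u v) : WEquiv u v :=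
  Relation.ReflTransGen.single h

theorem WEquiv.trans {u v w : Word N} (h₁ : WEquiv u v) (h₂ : WEquiv v w) : WEquiv u w :=
  Relation.ReflTransGen.trans h₁ h₂

theorem WEquiv.symm {u v : Word N} (h : WEquiv u v) : WEquiv v u := by
  induction h with
  | refl => exact .refl _
  | tail _ hs ih => exact Relation.ReflTransGen.head hs.symm ih

theorem WEquiv.append_left {u v : Word N} (p : Word N) (h : WEquiv u v) :
    WEquiv (p ++ u) (p ++ v) :=
  Relation.ReflTransGen.lift (p ++ ·) (fun _ _ hs => hs.append_left p) _ _ h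

theorem WEquiv.append_right {u v : Word N} (q : Word N) (h : WEquiv u v) :
    WEquiv (u ++ q) (v ++ q) :=
  Relation.ReflTransGen.lift (· ++ q) (fun _ _ hs => hs.append_right q) _ _ h

theorem WEquiv.append {u v u' v' : Word N} (hu : WEquiv u u') (hv : WEquiv v v') :
    WEquiv (u ++ v) (u' ++ v') :=
  (hu.append_right v).trans (hv.append_left u')

theorem WEquiv.perm {u v : Word N} (h : WEquiv u v) : u.Perm v := by
  induction h with
  | refl => exact .refl _
  | tail _ hs ih => exact ih.trans hs.perm

theorem WEquiv.mem {u v : Word N} {a : Letter N} (h : WEquiv u v) (ha : a ∈ u) : a ∈ v :=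
  h.perm.mem_iff.1 ha

theorem WEquiv.cons_comm {a : Letter N} {y : Word N} (h : ∀ r ∈ y, Comm a r) :
    WEquiv (a :: y) (y ++ [a]) := by
  induction y with
  | nil => exact .refl _
  | cons b y ih =>
    refine (WEquiv.single ⟨[], y, a, b, h b (by simp), rfl, rfl⟩).trans ?_
    exact (ih fun r hr => h r (by simp [hr])).append_left [b]

theorem WEquiv.append_comm {x y : Word N} (h : ∀ a ∈ x, ∀ b ∈ y, Comm a b) :
    WEquiv (x ++ y) (y ++ x) := by
  induction x with
  | nil => simpa using .refl y
  | cons a x ih =>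
    have hx := (ih fun a' ha' => h a' (by simp [ha'])).append_left [a]
    have ha := (WEquiv.cons_comm (h a (by simp))).append_right x
    simpa using hx.trans ha

end Commutation

section Absorption

/-- `RAbsLetter` is `RAbsBy Sub` and `PRAbsLetter` is `RAbsBy PSub`, definitionally. -/
def RAbsBy (R : Letter N → Letter N → Prop) (s : Letter N) (w : Word N) : Prop :=
  ∃ (x : Word N) (t : Letter N) (y : Word N), w = x ++ t :: y ∧ R s t ∧ ∀ r ∈ y, Comm s r

variable {R : Letter N → Letter N → Prop}

theorem PRAbsLetter.rAbsLetter {s : Letter N} {w : Word N} (h : PRAbsLetter s w) :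
    RAbsLetter s w :=
  let ⟨x, t, y, hw, hst, hy⟩ := h
  ⟨x, t, y, hw, hst.1, hy⟩

theorem LAbsLetter.of_swap {s : Letter N} {v v' : Word N} (h : LAbsLetter s v)
    (hv : SwapStep v v') : LAbsLetter s v' := by
  obtain ⟨x, t, y, rfl, hst, hx⟩ := h
  rcases hv.locate with ⟨x', hx', rfl⟩ | ⟨y', -, rfl⟩ | ⟨x, c, rfl, -, rfl⟩ | ⟨c, y, rfl, htc, rfl⟩
  · exact ⟨x', t, y, rfl, hst, fun r hr => hx r (hx'.perm.mem_iff.2 hr)⟩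
  · exact ⟨x, t, y', rfl, hst, hx⟩
  · exact ⟨x, t, c :: y, rfl, hst, fun r hr => hx r (by simp [hr])⟩
  · refine ⟨x ++ [c], t, y, by simp, hst, fun r hr => ?_⟩
    rcases List.mem_append.1 hr with hr | hr
    · exact hx r hr
    · exact List.mem_singleton.1 hr ▸ htc.of_sub_left hst

theorem LAbsLetter.of_wequiv {s : Letter N} {v v' : Word N} (h : LAbsLetter s v)
    (hv : WEquiv v v') : LAbsLetter s v' := by
  induction hv with
  | refl => exact h
  | tail _ hs ih => exact ih.of_swap hs

theorem RAbsBy.of_swap (hR : R ≤ Sub) {s : Letter N} {w w' : Word N}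
    (h : RAbsBy R s w) (hw : SwapStep w w') : RAbsBy R s w' := by
  obtain ⟨x, t, y, rfl, hst, hy⟩ := h
  rcases hw.locate with ⟨x', -, rfl⟩ | ⟨y', hy', rfl⟩ | ⟨x, c, rfl, hct, rfl⟩ | ⟨c, y, rfl, -, rfl⟩
  · exact ⟨x', t, y, rfl, hst, hy⟩
  · exact ⟨x, t, y', rfl, hst, fun r hr => hy r (hy'.perm.mem_iff.2 hr)⟩
  · refine ⟨x, t, c :: y, rfl, hst, fun r hr => ?_⟩
    rcases List.mem_cons.1 hr with rfl | hr
    · exact hct.symm.of_sub_left (hR _ _ hst)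
    · exact hy r hr
  · exact ⟨x ++ [c], t, y, by simp, hst, fun r hr => hy r (by simp [hr])⟩

theorem RAbsBy.of_wequiv (hR : R ≤ Sub) {s : Letter N} {w w' : Word N}
    (h : RAbsBy R s w) (hw : WEquiv w w') : RAbsBy R s w' := by
  induction hw with
  | refl => exact h
  | tail _ hs ih => exact ih.of_swap hR hs

theorem LAbsLetter.append_left {s : Letter N} {x v : Word N} (h : LAbsLetter s v)
    (hx : ∀ r ∈ x, Comm s r) : LAbsLetter s (x ++ v) := by
  obtain ⟨α, t, β, rfl, hst, hα⟩ := h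
  exact ⟨x ++ α, t, β, by simp, hst, fun r hr => (List.mem_append.1 hr).elim (hx r) (hα r)⟩

theorem RAbsBy.append_right {s : Letter N} {w y : Word N} (h : RAbsBy R s w)
    (hy : ∀ r ∈ y, Comm s r) : RAbsBy R s (w ++ y) := by
  obtain ⟨α, t, β, rfl, hst, hβ⟩ := h
  exact ⟨α, t, β ++ y, by simp, hst, fun r hr => (List.mem_append.1 hr).elim (hβ r) (hy r)⟩

theorem LAbsLetter.of_append {s : Letter N} {x v : Word N} (h : LAbsLetter s (x ++ v)) :
    LAbsLetter s x ∨ (∀ r ∈ x, Comm s r) ∧ LAbsLetter s v := by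
  obtain ⟨α, t, β, hv, hst, hα⟩ := h
  rcases List.append_eq_append_cons hv with ⟨m, rfl, rfl⟩ | ⟨m, rfl, rfl⟩
  · exact Or.inl ⟨α, t, m, rfl, hst, hα⟩
  · exact Or.inr ⟨fun r hr => hα r (by simp [hr]), m, t, β, rfl, hst,
      fun r hr => hα r (by simp [hr])⟩

theorem RAbsBy.of_append {s : Letter N} {w y : Word N} (h : RAbsBy R s (w ++ y)) :
    RAbsBy R s y ∨ RAbsBy R s w ∧ ∀ r ∈ y, Comm s r := by
  obtain ⟨α, t, β, hw, hst, hβ⟩ := h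
  rcases List.append_eq_append_cons hw with ⟨m, rfl, rfl⟩ | ⟨m, rfl, rfl⟩
  · exact Or.inr ⟨⟨α, t, m, rfl, hst, fun r hr => hβ r (by simp [hr])⟩,
      fun r hr => hβ r (by simp [hr])⟩
  · exact Or.inl ⟨m, t, β, rfl, hst, hβ⟩

theorem LAbsLetter.sub_or_erase {s f : Letter N} {p q : Word N}
    (h : LAbsLetter s (p ++ f :: q)) (hf : ∀ r ∈ p, Comm f r) :
    Sub s f ∨ Comm s f ∧ LAbsLetter s (p ++ q) := by
  obtain ⟨α, t, β, hv, hst, hα⟩ := h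
  rcases List.append_eq_append_cons hv with ⟨m, rfl, rfl⟩ | ⟨m, hm, rfl⟩
  · have hft : Comm f t := hf t (by simp)
    exact Or.inr ⟨hft.symm.of_sub_left hst, α, t, m ++ q, by simp, hst, hα⟩
  · rcases m with _ | ⟨g, m⟩ <;> simp only [List.nil_append, List.cons_append,
      List.cons.injEq] at hm
    · exact Or.inl (hm.1 ▸ hst)
    · obtain ⟨rfl, rfl⟩ := hm
      refine Or.inr ⟨hα f (by simp), p ++ m, t, β, by simp, hst, fun r hr => hα r ?_⟩
      simp only [List.mem_append, List.mem_cons] at hr ⊢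
      tauto

theorem RAbsBy.rel_or_erase (hR : R ≤ Sub) {s c : Letter N} {x y : Word N}
    (h : RAbsBy R s (x ++ c :: y)) (hc : ∀ r ∈ y, Comm c r) :
    R s c ∨ Comm s c ∧ RAbsBy R s (x ++ y) := by
  obtain ⟨α, t, β, hw, hst, hβ⟩ := h
  rcases List.append_eq_append_cons hw with ⟨m, rfl, rfl⟩ | ⟨m, hm, rfl⟩
  · refine Or.inr ⟨hβ c (by simp), α, t, m ++ y, by simp, hst, fun r hr => hβ r ?_⟩
    simp only [List.mem_append, List.mem_cons] at hr ⊢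
    tauto
  · rcases m with _ | ⟨g, m⟩ <;> simp only [List.nil_append, List.cons_append,
      List.cons.injEq] at hm
    · exact Or.inl (hm.1 ▸ hst)
    · obtain ⟨rfl, rfl⟩ := hm
      have hct : Comm c t := hc t (by simp)
      exact Or.inr ⟨hct.symm.of_sub_left (hR _ _ hst), x ++ m, t, β, by simp, hst, hβ⟩

end Absorption

section Reducedness

theorem not_reduced_iff {w : Word N} :
    ¬ Reduced w ↔ ∃ x b y, w = x ++ b :: y ∧ (LAbsLetter b y ∨ RAbsLetter b x) := by
  rw [Reduced, not_not]
  constructor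
  · rintro ⟨x, y, z, a, b, rfl, ⟨hab, hy⟩ | ⟨hba, hy⟩⟩
    · exact ⟨x, a, y ++ b :: z, rfl, Or.inl ⟨y, b, z, rfl, hab, hy⟩⟩
    · exact ⟨x ++ a :: y, b, z, by simp, Or.inr ⟨x, a, y, rfl, hba, hy⟩⟩
  · rintro ⟨x, b, y, rfl, ⟨α, t, β, rfl, hbt, hα⟩ | ⟨α, t, β, rfl, hbt, hβ⟩⟩
    · exact ⟨x, α, β, b, t, rfl, Or.inl ⟨hbt, hα⟩⟩
    · exact ⟨α, β, y, t, b, by simp, Or.inr ⟨hbt, hβ⟩⟩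

theorem Reduced.not_lAbsLetter {x y : Word N} {b : Letter N} (h : Reduced (x ++ b :: y)) :
    ¬ LAbsLetter b y :=
  fun hb => not_reduced_iff.2 ⟨x, b, y, rfl, Or.inl hb⟩ h

theorem Reduced.not_rAbsLetter {x y : Word N} {b : Letter N} (h : Reduced (x ++ b :: y)) :
    ¬ RAbsLetter b x :=
  fun hb => not_reduced_iff.2 ⟨x, b, y, rfl, Or.inr hb⟩ h

theorem Reduced.of_append_left {u v : Word N} (h : Reduced (u ++ v)) : Reduced u :=
  fun ⟨x, y, z, a, b, hu, hab⟩ => h ⟨x, y, z ++ v, a, b, by simp [hu], hab⟩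

theorem Reduced.of_append_right {u v : Word N} (h : Reduced (u ++ v)) : Reduced v :=
  fun ⟨x, y, z, a, b, hv, hab⟩ => h ⟨u ++ x, y, z, a, b, by simp [hv], hab⟩

theorem Reduced.of_swap {w w' : Word N} (h : Reduced w) (hw : SwapStep w w') : Reduced w' := by
  by_contra h'
  obtain ⟨x, b, y, rfl, hb⟩ := not_reduced_iff.1 h'
  rcases hw.symm.locate with ⟨x', hx, rfl⟩ | ⟨y', hy, rfl⟩ | ⟨x, c, rfl, hcb, rfl⟩ |
      ⟨c, y, rfl, hbc, rfl⟩
  · exact hb.elim h.not_lAbsLetter fun hb => h.not_rAbsLetter (RAbsBy.of_swap le_rfl hb hx)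
  · exact hb.elim (fun hb => h.not_lAbsLetter (hb.of_swap hy)) h.not_rAbsLetter
  · rcases hb with hb | hb
    · exact h.not_lAbsLetter (hb.append_left (x := [c]) (by simpa using hcb.symm))
    · rcases RAbsBy.rel_or_erase le_rfl (y := []) hb (by simp) with hb | ⟨-, hb⟩
      · exact hb.not_comm hcb.symm
      · rw [List.append_nil] at hb
        exact h.not_rAbsLetter hb
  · replace h : Reduced ((x ++ [c]) ++ b :: y) := by simpa using h
    rcases hb with hb | hb
    · rcases LAbsLetter.sub_or_erase (p := []) hb (by simp) with hb | ⟨-, hb⟩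
      · exact hb.not_comm hbc
      · exact h.not_lAbsLetter (by simpa using hb)
    · exact h.not_rAbsLetter (RAbsBy.append_right hb (by simpa using hbc))

theorem Reduced.of_wequiv {w w' : Word N} (h : Reduced w) (hw : WEquiv w w') : Reduced w' := by
  induction hw with
  | refl => exact h
  | tail _ hs ih => exact ih.of_swap hs

end Reducedness

section Reduction

theorem CancelStep.append_left {u v : Word N} (p : Word N) (h : CancelStep u v) :
    CancelStep (p ++ u) (p ++ v) := by
  obtain ⟨x, y, s, t, hts, hu, rfl⟩ := h
  refine ⟨p ++ x, y, s, t, hts, ?_, by simp⟩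
  rcases hu with rfl | rfl <;> simp

theorem CancelStep.append_right {u v : Word N} (q : Word N) (h : CancelStep u v) :
    CancelStep (u ++ q) (v ++ q) := by
  obtain ⟨x, y, s, t, hts, hu, rfl⟩ := h
  refine ⟨x, y ++ q, s, t, hts, ?_, by simp⟩
  rcases hu with rfl | rfl <;> simp

theorem Red.of_wequiv {u v : Word N} (h : WEquiv u v) : Red u v :=
  Relation.ReflTransGen.mono (fun _ _ => Or.inl) _ _ h

theorem Red.refl (u : Word N) : Red u u := Relation.ReflTransGen.refl

theorem Red.trans {u v w : Word N} (h₁ : Red u v) (h₂ : Red v w) : Red u w :=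
  Relation.ReflTransGen.trans h₁ h₂

theorem Red.append_left {u v : Word N} (p : Word N) (h : Red u v) : Red (p ++ u) (p ++ v) :=
  Relation.ReflTransGen.lift (p ++ ·)
    (fun _ _ hs => hs.imp (SwapStep.append_left p) (CancelStep.append_left p)) _ _ h

theorem Red.append_right {u v : Word N} (q : Word N) (h : Red u v) : Red (u ++ q) (v ++ q) :=
  Relation.ReflTransGen.lift (· ++ q)
    (fun _ _ hs => hs.imp (SwapStep.append_right q) (CancelStep.append_right q)) _ _ h

theorem Red.cons_of_lAbsLetter {s : Letter N} {v : Word N} (h : LAbsLetter s v) :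
    Red (s :: v) v := by
  obtain ⟨α, t, β, rfl, hst, hα⟩ := h
  have hmove : WEquiv (s :: (α ++ t :: β)) (α ++ s :: t :: β) := by
    simpa using (WEquiv.cons_comm hα).append_right (t :: β)
  exact (Red.of_wequiv hmove).trans
    (.single (Or.inr ⟨α, β, t, s, hst, Or.inr rfl, rfl⟩))

theorem Red.concat_of_rAbsLetter {s : Letter N} {u : Word N} (h : RAbsLetter s u) :
    Red (u ++ [s]) u := by
  obtain ⟨α, t, β, rfl, hst, hβ⟩ := h
  have hmove : WEquiv (α ++ t :: β ++ [s]) (α ++ t :: s :: β) := by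
    simpa using ((WEquiv.cons_comm hβ).symm.append_left (α ++ [t]))
  exact (Red.of_wequiv hmove).trans
    (.single (Or.inr ⟨α, β, t, s, hst, Or.inl rfl, rfl⟩))

theorem Red.append_of_lAbsWord {u v : Word N} (h : LAbsWord u v) : Red (u ++ v) v := by
  induction u with
  | nil => exact Red.refl v
  | cons s u ih =>
    exact ((ih fun r hr => h r (by simp [hr])).append_left [s]).trans
      (Red.cons_of_lAbsLetter (h s (by simp)))

theorem Red.append_of_rAbsLetter {u v : Word N} (h : ∀ s ∈ v, RAbsLetter s u) :
    Red (u ++ v) u := by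
  induction v with
  | nil => simpa using Red.refl u
  | cons s v ih =>
    have hs : Red (u ++ s :: v) (u ++ v) := by
      simpa using (Red.concat_of_rAbsLetter (h s (by simp))).append_right v
    exact hs.trans (ih fun r hr => h r (by simp [hr]))

end Reduction

section Existence

structure IsDecomposition (u v u₁ u' v' v₁ : Word N) : Prop where
  wequiv_left : WEquiv u (u₁ ++ u')
  wequiv_right : WEquiv v (v' ++ v₁)
  lAbsWord : LAbsWord u' v₁
  pRAbsLetter : ∀ s ∈ v', PRAbsLetter s u₁
  comm : ∀ a ∈ u', ∀ b ∈ v', Comm a b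

theorem IsDecomposition.refl (u v : Word N) : IsDecomposition u v u [] [] v where
  wequiv_left := by simpa using .refl u
  wequiv_right := .refl v
  lAbsWord := by simp [LAbsWord]
  pRAbsLetter := by simp
  comm := by simp

theorem IsDecomposition.red {u v u₁ u' v' v₁ : Word N} (h : IsDecomposition u v u₁ u' v' v₁) :
    Red (u ++ v) (u₁ ++ v₁) := by
  have hmove : WEquiv (u ++ v) (u₁ ++ v' ++ (u' ++ v₁)) := by
    refine (h.wequiv_left.append h.wequiv_right).trans ?_
    simpa using ((WEquiv.append_comm h.comm).append_left u₁).append_right v₁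
  exact (Red.of_wequiv hmove).trans <| ((Red.append_of_lAbsWord h.lAbsWord).append_left _).trans <|
    (Red.append_of_rAbsLetter fun s hs => (h.pRAbsLetter s hs).rAbsLetter).append_right v₁

/-- A letter of `v'` absorbed by `c` would be absorbed into `f` within the reduced word
`v' ++ v₁`. -/
theorem comm_of_pRAbsLetter_of_reduced {x y p q v' : Word N} {c f : Letter N}
    (hcf : Sub c f) (hcy : ∀ r ∈ y, Comm c r) (hcp : ∀ r ∈ p, Comm c r)
    (hred : Reduced (v' ++ p ++ f :: q)) (habs : ∀ b ∈ v', PRAbsLetter b (x ++ c :: y)) :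
    ∀ b ∈ v', Comm b c := by
  induction v' with
  | nil => simp
  | cons b v' ih =>
    have hv' : ∀ r ∈ v', Comm r c :=
      ih (Reduced.of_append_right (u := [b]) hred) fun r hr => habs r (by simp [hr])
    intro b' hb'
    rcases List.mem_cons.1 hb' with rfl | hb'
    · rcases RAbsBy.rel_or_erase psub_le_sub (habs b' (by simp)) hcy with
        hbc | ⟨hbc, -⟩
      · refine absurd ?_ (Reduced.not_lAbsLetter (x := []) hred)
        refine LAbsLetter.append_left ⟨[], f, q, rfl, hbc.1.trans hcf, by simp⟩ fun r hr => ?_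
        rcases List.mem_append.1 hr with hr | hr
        · exact (hv' r hr).symm.of_sub_left hbc.1
        · exact (hcp r hr).of_sub_left hbc.1
      · exact hbc
    · exact hv' b' hb'

theorem comm_of_lAbsLetter_of_reduced {x y p q u' : Word N} {c f : Letter N}
    (hfc : Sub f c) (hfy : ∀ r ∈ y, Comm f r) (hfp : ∀ r ∈ p, Comm f r)
    (hred : Reduced (x ++ c :: y ++ u')) (habs : LAbsWord u' (p ++ f :: q)) :
    ∀ s ∈ u', Comm s f := by
  induction u' using List.reverseRecOn with
  | nil => simp
  | append_singleton u' s ih =>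
    have hu' : ∀ r ∈ u', Comm r f :=
      ih (Reduced.of_append_left (v := [s]) (by simpa using hred)) fun r hr =>
        habs r (by simp [hr])
    intro s' hs'
    rcases List.mem_append.1 hs' with hs' | hs'
    · exact hu' s' hs'
    obtain rfl := List.mem_singleton.1 hs'
    rcases (habs s' (by simp)).sub_or_erase hfp with hsf | ⟨hsf, -⟩
    · refine absurd ?_ (Reduced.not_rAbsLetter (x := x ++ c :: (y ++ u')) (y := [])
        (by simpa using hred))
      refine ⟨x, c, y ++ u', rfl, hsf.trans hfc, fun r hr => ?_⟩
      rcases List.mem_append.1 hr with hr | hr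
      · exact (hfy r hr).of_sub_left hsf
      · exact (hu' r hr).symm.of_sub_left hsf
    · exact hsf

theorem IsDecomposition.transfer_left {u v x y u' v' p q : Word N} {c f : Letter N}
    (h : IsDecomposition u v (x ++ c :: y) u' v' (p ++ f :: q)) (hv : Reduced v)
    (hcf : Sub c f) (hcy : ∀ r ∈ y, Comm c r) (hcp : ∀ r ∈ p, Comm c r) :
    IsDecomposition u v (x ++ y) (c :: u') v' (p ++ f :: q) := by
  have hc := comm_of_pRAbsLetter_of_reduced hcf hcy hcp
    (by simpa using hv.of_wequiv h.wequiv_right) h.pRAbsLetter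
  refine ⟨h.wequiv_left.trans ?_, h.wequiv_right, ?_, fun b hb => ?_, ?_⟩
  · simpa using ((WEquiv.cons_comm hcy).append_left x).append_right u'
  · rintro s (_ | ⟨_, hs⟩)
    exacts [⟨p, f, q, rfl, hcf, hcp⟩, h.lAbsWord s hs]
  · rcases RAbsBy.rel_or_erase psub_le_sub (h.pRAbsLetter b hb) hcy with
      hbc | ⟨-, hb⟩
    exacts [absurd (hc b hb) hbc.1.not_comm, hb]
  · rintro a (_ | ⟨_, ha⟩) b hb
    exacts [(hc b hb).symm, h.comm a ha b hb]

theorem IsDecomposition.transfer_right {u v x y u' v' p q : Word N} {c f : Letter N}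
    (h : IsDecomposition u v (x ++ c :: y) u' v' (p ++ f :: q)) (hu : Reduced u)
    (hfc : PSub f c) (hfy : ∀ r ∈ y, Comm f r) (hfp : ∀ r ∈ p, Comm f r) :
    IsDecomposition u v (x ++ c :: y) u' (v' ++ [f]) (p ++ q) := by
  have hf := comm_of_lAbsLetter_of_reduced hfc.1 hfy hfp
    (by simpa using hu.of_wequiv h.wequiv_left) h.lAbsWord
  refine ⟨h.wequiv_left, h.wequiv_right.trans ?_, fun s hs => ?_, fun b hb => ?_, ?_⟩
  · simpa using ((WEquiv.cons_comm hfp).symm.append_left v').append_right q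
  · rcases (h.lAbsWord s hs).sub_or_erase hfp with hsf | ⟨-, hs⟩
    exacts [absurd (hf s hs) hsf.not_comm, hs]
  · rcases List.mem_append.1 hb with hb | hb
    · exact h.pRAbsLetter b hb
    · obtain rfl := List.mem_singleton.1 hb
      exact ⟨x, c, y, rfl, hfc, hfy⟩
  · intro a ha b hb
    rcases List.mem_append.1 hb with hb | hb
    · exact h.comm a ha b hb
    · exact List.mem_singleton.1 hb ▸ hf a ha

theorem exists_cross_absorption {u₁ v₁ : Word N} (hu₁ : Reduced u₁) (hv₁ : Reduced v₁)
    (h : ¬ Reduced (u₁ ++ v₁)) :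
    ∃ x c y p f q, u₁ = x ++ c :: y ∧ v₁ = p ++ f :: q ∧
      ((Sub c f ∧ (∀ r ∈ y, Comm c r) ∧ ∀ r ∈ p, Comm c r) ∨
        (PSub f c ∧ (∀ r ∈ y, Comm f r) ∧ ∀ r ∈ p, Comm f r)) := by
  obtain ⟨x, b, z, hw, hb⟩ := not_reduced_iff.1 h
  rcases List.append_eq_append_cons hw with ⟨m, rfl, rfl⟩ | ⟨m, rfl, rfl⟩
  · rcases hb with hb | hb
    · rcases hb.of_append with hb | ⟨hbm, p, f, q, rfl, hbf, hbp⟩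
      · exact absurd hb hu₁.not_lAbsLetter
      · exact ⟨x, b, m, p, f, q, rfl, rfl, Or.inl ⟨hbf, hbm, hbp⟩⟩
    · exact absurd hb hu₁.not_rAbsLetter
  · rcases hb with hb | hb
    · exact absurd hb hv₁.not_lAbsLetter
    · rcases RAbsBy.of_append hb with hb | ⟨⟨x, t, y, rfl, hbt, hby⟩, hbm⟩
      · exact absurd hb hv₁.not_rAbsLetter
      · by_cases hbt' : b = t
        · subst hbt'
          exact ⟨x, b, y, m, b, z, rfl, rfl, Or.inl ⟨Sub.refl b, hby, hbm⟩⟩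
        · exact ⟨x, t, y, m, b, z, rfl, rfl, Or.inr ⟨⟨hbt, hbt'⟩, hby, hbm⟩⟩

theorem exists_reduced_isDecomposition {u v : Word N} (hu : Reduced u) (hv : Reduced v) :
    ∃ u₁ u' v' v₁, IsDecomposition u v u₁ u' v' v₁ ∧ Reduced (u₁ ++ v₁) := by
  suffices ∀ n u₁ u' v' v₁, u₁.length + v₁.length = n → IsDecomposition u v u₁ u' v' v₁ →
      ∃ u₁ u' v' v₁, IsDecomposition u v u₁ u' v' v₁ ∧ Reduced (u₁ ++ v₁) from
    this _ u [] [] v rfl (.refl u v)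
  intro n
  induction n using Nat.strong_induction_on with
  | _ n ih =>
    intro u₁ u' v' v₁ hn h
    by_cases hred : Reduced (u₁ ++ v₁)
    · exact ⟨u₁, u', v', v₁, h, hred⟩
    obtain ⟨x, c, y, p, f, q, rfl, rfl, hcf | hfc⟩ := exists_cross_absorption
      (hu.of_wequiv h.wequiv_left).of_append_left (hv.of_wequiv h.wequiv_right).of_append_right
      hred
    · exact ih _ (by simp at hn ⊢; omega) _ _ _ _ rfl (h.transfer_left hv hcf.1 hcf.2.1 hcf.2.2)
    · exact ih _ (by simp at hn ⊢; omega) _ _ _ _ rfl (h.transfer_right hu hfc.1 hfc.2.1 hfc.2.2)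

end Existence

section Uniqueness

theorem WEquiv.exists_of_concat {z w : Word N} {a : Letter N} (h : WEquiv (z ++ [a]) w) :
    ∃ w₁ w₂, w = w₁ ++ a :: w₂ ∧ (∀ r ∈ w₂, Comm a r) ∧ WEquiv z (w₁ ++ w₂) := by
  induction h with
  | refl => exact ⟨z, [], rfl, by simp, by simpa using .refl z⟩
  | tail _ hs ih =>
    obtain ⟨w₁, w₂, rfl, hw₂, hz⟩ := ih
    rcases hs.locate with ⟨w₁', hw₁, rfl⟩ | ⟨w₂', hw₂', rfl⟩ | ⟨w₁, c, rfl, hca, rfl⟩ |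
        ⟨c, w₂, rfl, -, rfl⟩
    · exact ⟨w₁', w₂, rfl, hw₂, hz.trans ((WEquiv.single hw₁).append_right w₂)⟩
    · exact ⟨w₁, w₂', rfl, fun r hr => hw₂ r (hw₂'.perm.mem_iff.2 hr),
        hz.trans ((WEquiv.single hw₂').append_left w₁)⟩
    · refine ⟨w₁, c :: w₂, rfl, fun r hr => ?_, by simpa using hz⟩
      rcases List.mem_cons.1 hr with rfl | hr
      exacts [hca.symm, hw₂ r hr]
    · exact ⟨w₁ ++ [c], w₂, by simp, fun r hr => hw₂ r (by simp [hr]), by simpa using hz⟩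

/-- Levi's lemma for commutation-equivalence. -/
theorem WEquiv.exists_factorization {a b c d : Word N} (h : WEquiv (a ++ b) (c ++ d)) :
    ∃ p q r s, WEquiv a (p ++ q) ∧ WEquiv b (r ++ s) ∧ WEquiv c (p ++ r) ∧ WEquiv d (q ++ s) := by
  induction d using List.reverseRecOn generalizing a b with
  | nil => exact ⟨a, [], b, [], by simpa using .refl a, by simpa using .refl b,
      by simpa using h.symm, .refl []⟩
  | append_singleton d x ih =>
    obtain ⟨w₁, w₂, hab, hx, hcd⟩ :=
      WEquiv.exists_of_concat (by simpa using h.symm : WEquiv (c ++ d ++ [x]) (a ++ b))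
    rcases List.append_eq_append_cons hab with ⟨m, rfl, rfl⟩ | ⟨m, rfl, rfl⟩
    · obtain ⟨p, q, r, s, hp, hr, hc, hd⟩ := ih (a := w₁ ++ m) (b := b) (by simpa using hcd.symm)
      have hxm : ∀ y ∈ m, Comm x y := fun y hy => hx y (by simp [hy])
      have hxs : ∀ y ∈ s, Comm x y := fun y hy =>
        hx y (List.mem_append_right m (hr.symm.mem (List.mem_append_right r hy)))
      have hmove_a : WEquiv (w₁ ++ x :: m) (w₁ ++ m ++ [x]) := by
        simpa using (WEquiv.cons_comm hxm).append_left w₁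
      have hmove_d : WEquiv (q ++ s ++ [x]) (q ++ [x] ++ s) := by
        simpa using (WEquiv.cons_comm hxs).symm.append_left q
      exact ⟨p, q ++ [x], r, s, hmove_a.trans (by simpa using hp.append_right [x]), hr, hc,
        (hd.append_right [x]).trans hmove_d⟩
    · obtain ⟨p, q, r, s, hp, hr, hc, hd⟩ := ih (a := a) (b := m ++ w₂) (by simpa using hcd.symm)
      have hmove_b : WEquiv (m ++ x :: w₂) (m ++ w₂ ++ [x]) := by
        simpa using (WEquiv.cons_comm hx).append_left m
      exact ⟨p, q, r, s ++ [x], hp, hmove_b.trans (by simpa using hr.append_right [x]), hc,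
        by simpa using hd.append_right [x]⟩

theorem eq_nil_of_pRAbsLetter {u v R S : Word N} (h : Reduced (u ++ v))
    (hv : WEquiv v (R ++ S)) (hR : ∀ r ∈ R, PRAbsLetter r u) : R = [] := by
  cases R with
  | nil => rfl
  | cons r R =>
    have h' : Reduced (u ++ r :: (R ++ S)) := h.of_wequiv (hv.append_left u)
    exact absurd (hR r (by simp)).rAbsLetter h'.not_rAbsLetter

/-- The last letter of `R` would end `w₁` and be absorbed into `x₁`. -/
theorem IsDecomposition.eq_nil_of_factorization {u v u₁ u' v' v₁ w₁ w' x' x₁ P R S P' Q' R' S' :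
      Word N}
    (hD : IsDecomposition u v u₁ u' v' v₁) (hE : IsDecomposition u v w₁ w' x' x₁)
    (hE_red : Reduced (w₁ ++ x₁)) (hw₁ : WEquiv w₁ (P ++ R)) (hu' : WEquiv u' (R ++ S))
    (hv' : WEquiv v' (P' ++ Q')) (hv₁ : WEquiv v₁ (R' ++ S')) (hx' : WEquiv x' (P' ++ R'))
    (hx₁ : WEquiv x₁ (Q' ++ S')) : R = [] := by
  induction R using List.reverseRecOn with
  | nil => rfl
  | append_singleton R r =>
    exfalso
    have hr : r ∈ u' := hu'.symm.mem (by simp)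
    replace hw₁ : WEquiv w₁ ((P ++ R) ++ r :: []) := by simpa using hw₁
    rcases ((hD.lAbsWord r hr).of_wequiv hv₁).of_append with ⟨α, t, β, rfl, hrt, -⟩ | ⟨-, hrS'⟩
    · have ht : t ∈ x' := hx'.symm.mem (by simp)
      rcases RAbsBy.rel_or_erase psub_le_sub
        (RAbsBy.of_wequiv psub_le_sub (hE.pRAbsLetter t ht) hw₁) (by simp) with
        htr | ⟨htr, -⟩
      · exact htr.2 (htr.1.antisymm hrt)
      · exact hrt.not_comm htr.symm
    · have h : Reduced ((P ++ R) ++ r :: (Q' ++ S')) :=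
        hE_red.of_wequiv (by simpa using hw₁.append hx₁)
      refine h.not_lAbsLetter (hrS'.append_left fun q hq => hD.comm r hr q ?_)
      exact hv'.symm.mem (by simp [hq])

theorem IsDecomposition.unique {u v u₁ u' v' v₁ w₁ w' x' x₁ : Word N}
    (hD : IsDecomposition u v u₁ u' v' v₁) (hE : IsDecomposition u v w₁ w' x' x₁)
    (hD_red : Reduced (u₁ ++ v₁)) (hE_red : Reduced (w₁ ++ x₁)) :
    WEquiv u₁ w₁ ∧ WEquiv u' w' ∧ WEquiv v' x' ∧ WEquiv v₁ x₁ := by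
  obtain ⟨P, Q, R, S, hu₁, hu', hw₁, hw'⟩ :=
    (hD.wequiv_left.symm.trans hE.wequiv_left).exists_factorization
  obtain ⟨P', Q', R', S', hv', hv₁, hx', hx₁⟩ :=
    (hD.wequiv_right.symm.trans hE.wequiv_right).exists_factorization
  obtain rfl := hD.eq_nil_of_factorization hE hE_red hw₁ hu' hv' hv₁ hx' hx₁
  obtain rfl := hE.eq_nil_of_factorization hD hD_red hu₁ hw' hx' hx₁ hv' hv₁
  simp only [List.append_nil, List.nil_append] at hu₁ hu' hw₁ hw'
  have hu₁w₁ : WEquiv u₁ w₁ := hu₁.trans hw₁.symm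
  obtain rfl := eq_nil_of_pRAbsLetter hD_red hv₁ fun r hr =>
    RAbsBy.of_wequiv psub_le_sub (hE.pRAbsLetter r (hx'.symm.mem (by simp [hr])))
      hu₁w₁.symm
  obtain rfl := eq_nil_of_pRAbsLetter hE_red hx₁ fun q hq =>
    RAbsBy.of_wequiv psub_le_sub (hD.pRAbsLetter q (hv'.symm.mem (by simp [hq])))
      hu₁w₁
  simp only [List.append_nil, List.nil_append] at hv' hv₁ hx' hx₁
  exact ⟨hu₁w₁, hu'.trans hw'.symm, hv'.trans hx'.symm, hv₁.trans hx₁.symm⟩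

end Uniqueness

end PS

open PS in
/-- Decomposition Lemma. -/
theorem decomposition_lemma {N : ℕ} (u v : Word N)
    (hu : Reduced u) (hv : Reduced v) :
    ∃ u₁ u' v' v₁ : Word N,
      WEquiv u (u₁ ++ u') ∧ WEquiv v (v' ++ v₁) ∧
      LAbsWord u' v₁ ∧ (∀ s ∈ v', PRAbsLetter s u₁) ∧
      (∀ a ∈ u', ∀ b ∈ v', Comm a b) ∧
      Reduced (u₁ ++ v₁) ∧ Red (u ++ v) (u₁ ++ v₁) ∧
      ∀ w₁ w' x' x₁ : Word N,
        WEquiv u (w₁ ++ w') → WEquiv v (x' ++ x₁) →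
        LAbsWord w' x₁ → (∀ s ∈ x', PRAbsLetter s w₁) →
        (∀ a ∈ w', ∀ b ∈ x', Comm a b) → Reduced (w₁ ++ x₁) →
        WEquiv u₁ w₁ ∧ WEquiv u' w' ∧ WEquiv v' x' ∧ WEquiv v₁ x₁ := by
  obtain ⟨u₁, u', v', v₁, hD, hred⟩ := exists_reduced_isDecomposition hu hv
  refine ⟨u₁, u', v', v₁, hD.wequiv_left, hD.wequiv_right, hD.lAbsWord, hD.pRAbsLetter, hD.comm,
    hred, hD.red, fun w₁ w' x' x₁ hw hx hlabs hprabs hcomm hred' => ?_⟩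
  exact hD.unique ⟨hw, hx, hlabs, hprabs, hcomm⟩ hred hred'
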